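/- Let G be a finite simple graph with nonnegative edge weights x such that every odd cycle of G has total weight at least 1, and suppose x_e < 1/2 for every edge e of G. If S is a set of vertices with d_x(u, v) ≤ 1/4 for every pair u, v ∈ S, then the induced subgraph G[S] is bipartite. -/

import Mathlib

/-!
Call a walk *light* if its weight is below `1/2`. An odd closed walk with nonnegative weights
contains an odd cycle of no larger weight, so every closed walk of weight `< 1` is even; in
particular all light walks between two vertices have the same parity. For `c ∈ S`, mark each `v`
reachable from `c` by the parity of light `c`–`v` walks, which exist since `d_x(c, v) ≤ 1/4`.
Along an edge `ab` of `G[S]` the mark flips: light walks to `a` and to `b` of weight close to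
`1/4`, closed up by `ab` (weight `< 1/2`), form a closed walk of weight `< 1`, hence an even one.
So every closed walk in `G[S]` is even.
-/

open SimpleGraph

/-- The weight of a walk: the sum of the weights of its edges, counted with multiplicity. -/
def walkWeight {V : Type*} {G : SimpleGraph V} (x : Sym2 V → ℝ) {u v : V}
    (p : G.Walk u v) : ℝ :=
  (p.edges.map x).sum

/-- The shortest-path distance between `u` and `v` induced by the edge weights `x`. -/
noncomputable def wdist {V : Type*} (G : SimpleGraph V) (x : Sym2 V → ℝ) (u v : V) : ℝ :=
  sInf {r | ∃ p : G.Walk u v, walkWeight x p = r}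

section WalkWeight

variable {V : Type*} {G : SimpleGraph V} {x : Sym2 V → ℝ}

@[simp]
lemma walkWeight_cons {u v w : V} (h : G.Adj u v) (p : G.Walk v w) :
    walkWeight x (Walk.cons h p) = x s(u, v) + walkWeight x p := by
  simp [walkWeight]

@[simp]
lemma walkWeight_append {u v w : V} (p : G.Walk u v) (q : G.Walk v w) :
    walkWeight x (p.append q) = walkWeight x p + walkWeight x q := by
  simp [walkWeight, Walk.edges_append]

@[simp]
lemma walkWeight_concat {u v w : V} (p : G.Walk u v) (h : G.Adj v w) :
    walkWeight x (p.concat h) = walkWeight x p + x s(v, w) := by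
  simp [walkWeight, Walk.edges_concat]

@[simp]
lemma walkWeight_reverse {u v : V} (p : G.Walk u v) :
    walkWeight x p.reverse = walkWeight x p := by
  simp [walkWeight, Walk.edges_reverse, List.sum_reverse]

lemma walkWeight_nonneg (hx : ∀ e ∈ G.edgeSet, 0 ≤ x e) {u v : V} (p : G.Walk u v) :
    0 ≤ walkWeight x p :=
  List.sum_nonneg <| by
    simpa using fun e he ↦ hx e (p.edges_subset_edgeSet he)

lemma exists_walkWeight_lt_of_wdist_lt {u v : V} {r : ℝ} (huv : G.Reachable u v)
    (hr : wdist G x u v < r) : ∃ p : G.Walk u v, walkWeight x p < r := by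
  rw [wdist] at hr
  obtain ⟨_, ⟨p, rfl⟩, hp⟩ :=
    exists_lt_of_csInf_lt (s := {r | ∃ p : G.Walk u v, walkWeight x p = r}) ⟨_, huv.some, rfl⟩ hr
  exact ⟨p, hp⟩

/-- An odd closed walk which is not a cycle splits at a repeated vertex into two shorter closed
walks, one of which is odd. -/
theorem exists_odd_isCycle_walkWeight_le (hx : ∀ e ∈ G.edgeSet, 0 ≤ x e) {v : V}
    (p : G.Walk v v) (hp : Odd p.length) :
    ∃ (u : V) (C : G.Walk u u), C.IsCycle ∧ Odd C.length ∧ walkWeight x C ≤ walkWeight x p := by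
  induction hn : p.length using Nat.strong_induction_on generalizing v p with
  | _ n ih =>
  cases p with
  | nil => simp at hp
  | cons h q =>
    by_cases hq : q.IsPath
    · refine ⟨v, _, Walk.isCycle_iff_isPath_tail_and_le_length.mpr ⟨by simpa using hq, ?_⟩, hp,
        le_rfl⟩
      have hq0 : q.length ≠ 0 := fun h0 ↦ h.ne (q.eq_of_length_eq_zero h0).symm
      rw [Walk.length_cons] at hp ⊢
      rcases hp with ⟨k, hk⟩
      omega
    · obtain ⟨w, r, ⟨q₁, q₂, rfl⟩, hr⟩ : ∃ (w : V) (r : G.Walk w w), r.IsSubwalk q ∧ ¬ r.Nil := by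
        simpa [Walk.isPath_iff_isSubwalk_imp_nil] using hq
      set p' := Walk.cons h (q₁.append q₂)
      have hlen : p'.length + r.length = n := by
        simp only [p', ← hn, Walk.length_cons, Walk.length_append]
        omega
      have hweight : walkWeight x (Walk.cons h ((q₁.append r).append q₂)) =
          walkWeight x p' + walkWeight x r := by
        simp only [p', walkWeight_cons, walkWeight_append]
        ring
      have hr0 : 0 < r.length := Walk.not_nil_iff_lt_length.mp hr
      have hp'0 : 0 < p'.length := Nat.succ_pos _
      rw [hweight]
      rcases Nat.even_or_odd r.length with hre | hro
      · have hp'o : Odd p'.length := by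
          rw [hn, ← hlen] at hp
          exact (Nat.odd_add.mp hp).mpr hre
        obtain ⟨u, C, hC, hCo, hCw⟩ := ih _ (by omega) p' hp'o rfl
        exact ⟨u, C, hC, hCo, by linarith [walkWeight_nonneg hx r]⟩
      · obtain ⟨u, C, hC, hCo, hCw⟩ := ih _ (by omega) r hro rfl
        exact ⟨u, C, hC, hCo, by linarith [walkWeight_nonneg hx p']⟩

def HasOddLightWalk (G : SimpleGraph V) (x : Sym2 V → ℝ) (c v : V) : Prop :=
  ∃ p : G.Walk c v, walkWeight x p < 1 / 2 ∧ Odd p.length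

variable (hx : ∀ e ∈ G.edgeSet, 0 ≤ x e)
  (hodd : ∀ (v : V) (C : G.Walk v v), C.IsCycle → Odd C.length → 1 ≤ walkWeight x C)
include hx hodd

lemma even_length_of_walkWeight_lt_one {v : V} (p : G.Walk v v) (hp : walkWeight x p < 1) :
    Even p.length := by
  refine Nat.not_odd_iff_even.mp fun hpo ↦ ?_
  obtain ⟨u, C, hC, hCo, hCw⟩ := exists_odd_isCycle_walkWeight_le hx p hpo
  linarith [hodd u C hC hCo]

lemma odd_length_iff_of_walkWeight_add_lt_one {u v : V} (p q : G.Walk u v)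
    (h : walkWeight x p + walkWeight x q < 1) : Odd p.length ↔ Odd q.length := by
  have := even_length_of_walkWeight_lt_one hx hodd (p.append q.reverse) (by simpa using h)
  rw [Walk.length_append, Walk.length_reverse, Nat.even_add] at this
  simpa only [← Nat.not_even_iff_odd, not_iff_not] using this

lemma hasOddLightWalk_iff {c v : V} (p : G.Walk c v) (hp : walkWeight x p < 1 / 2) :
    HasOddLightWalk G x c v ↔ Odd p.length :=
  ⟨fun ⟨q, hq, hqo⟩ ↦ (odd_length_iff_of_walkWeight_add_lt_one hx hodd q p (by linarith)).mp hqo,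
    fun hpo ↦ ⟨p, hp, hpo⟩⟩

lemma hasOddLightWalk_iff_not_of_adj {c a b : V} (hca : G.Reachable c a)
    (hdca : wdist G x c a ≤ 1 / 4) (hdcb : wdist G x c b ≤ 1 / 4) (hab : G.Adj a b)
    (hxab : x s(a, b) < 1 / 2) : HasOddLightWalk G x c a ↔ ¬ HasOddLightWalk G x c b := by
  set δ := (1 / 2 - x s(a, b)) / 2 with hδ
  have hxab₀ := hx s(a, b) hab
  obtain ⟨pa, hpa⟩ : ∃ p : G.Walk c a, walkWeight x p < 1 / 4 + δ :=
    exists_walkWeight_lt_of_wdist_lt hca (by linarith)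
  obtain ⟨pb, hpb⟩ : ∃ p : G.Walk c b, walkWeight x p < 1 / 4 + δ :=
    exists_walkWeight_lt_of_wdist_lt (hca.trans hab.reachable) (by linarith)
  have hparity := odd_length_iff_of_walkWeight_add_lt_one hx hodd (pa.concat hab) pb
    (by rw [walkWeight_concat]; linarith)
  rw [hasOddLightWalk_iff hx hodd pa (by linarith), hasOddLightWalk_iff hx hodd pb (by linarith),
    ← hparity, Walk.length_concat, Nat.odd_add_one, not_not]

end WalkWeight

namespace SimpleGraph

variable {W : Type*} {H : SimpleGraph W}

lemma Walk.even_length_iff_of_adj_iff_not {c : W} (P : W → Prop)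
    (hP : ∀ a b, H.Reachable a c → H.Adj a b → (P a ↔ ¬ P b)) {a : W} (q : H.Walk a c) :
    Even q.length ↔ (P a ↔ P c) := by
  induction q with
  | nil => simp
  | cons h q ih =>
    rw [Walk.length_cons, Nat.even_add_one, ih hP, hP _ _ ⟨Walk.cons h q⟩ h]
    tauto

lemma colorable_two_of_adj_iff_not (P : W → W → Prop)
    (hP : ∀ a b c, H.Reachable a c → H.Adj a b → (P c a ↔ ¬ P c b)) : H.Colorable 2 :=
  two_colorable_iff_forall_loop_even.mpr fun c q ↦ by
    simpa using Walk.even_length_iff_of_adj_iff_not (P c) (hP · · c) q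

end SimpleGraph

theorem stmt10_general {V : Type*} (G : SimpleGraph V) (x : Sym2 V → ℝ)
    (hx : ∀ e ∈ G.edgeSet, 0 ≤ x e ∧ x e < 1 / 2)
    (hodd : ∀ (v : V) (C : G.Walk v v), C.IsCycle → Odd C.length → 1 ≤ walkWeight x C)
    (S : Set V) (hS : ∀ u ∈ S, ∀ v ∈ S, wdist G x u v ≤ 1 / 4) :
    (G.induce S).Colorable 2 := by
  have hx₀ : ∀ e ∈ G.edgeSet, 0 ≤ x e := fun e he ↦ (hx e he).1
  refine colorable_two_of_adj_iff_not (fun c v ↦ HasOddLightWalk G x c v) fun a b c hac hab ↦ ?_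
  have hca : G.Reachable c a := (hac.map (Embedding.induce S).toHom).symm
  exact hasOddLightWalk_iff_not_of_adj hx₀ hodd hca (hS _ c.2 _ a.2) (hS _ c.2 _ b.2) hab
    (hx _ hab).2

/-- If every odd cycle has total weight at least 1, `x_e < 1/2` for every edge, and `S` is a
set of vertices with pairwise distances at most `1/4`, then the induced subgraph `G[S]` is
bipartite. -/
theorem stmt10 {V : Type*} [Fintype V] (G : SimpleGraph V) (x : Sym2 V → ℝ)
    (hx : ∀ e ∈ G.edgeSet, 0 ≤ x e ∧ x e < 1 / 2)
    (hodd : ∀ (v : V) (C : G.Walk v v), C.IsCycle → Odd C.length → 1 ≤ walkWeight x C)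
    (S : Set V) (hS : ∀ u ∈ S, ∀ v ∈ S, wdist G x u v ≤ 1 / 4) :
    (G.induce S).Colorable 2 :=
  stmt10_general G x hx hodd S hS
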